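/- Let S ≤ P_n be a stabilizer group of rank r and p ∈ P_n a Hermitian Pauli with −p ∉ S. Then S' := ⟨p⟩·(S ∩ C(p)) is a stabilizer group, and its rank is r + 1 if p ∈ C(S) ∖ S, and r otherwise. In particular, measuring a Hermitian Pauli never increases the number k = n − rank of logical qubits, and decreases it by at most one. -/

import Mathlib

set_option linter.unusedSectionVars false


open Matrix

noncomputable section

/-- The space of operators on `ι`-many qubits: matrices whose rows and columns are
indexed by bit strings `ι → Fin 2`, with complex entries. -/
abbrev PMat (ι : Type) [Fintype ι] [DecidableEq ι] : Type :=
  Matrix (ι → Fin 2) (ι → Fin 2) ℂ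

variable (ι : Type) [Fintype ι] [DecidableEq ι]

lemma fin2_add_one_add_one : ∀ a : Fin 2, a + 1 + 1 = a := by decide

/-- The matrix of the operator `X k`, which flips the `k`-th bit of a basis state. -/
def XMat (k : ι) : PMat ι :=
  Matrix.of fun x y => if y = Function.update x k (x k + 1) then (1 : ℂ) else 0

/-- The matrix of the operator `Z k`, which multiplies the basis state `x` by `(-1) ^ (x k)`. -/
def ZMat (k : ι) : PMat ι :=
  Matrix.diagonal fun x => (-1 : ℂ) ^ (x k : ℕ)

lemma XMat_mul_self (k : ι) : XMat ι k * XMat ι k = 1 := by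
  have hinv : ∀ x : ι → Fin 2,
      Function.update (Function.update x k (x k + 1)) k
        (Function.update x k (x k + 1) k + 1) = x := by
    intro x
    ext j
    rcases eq_or_ne j k with rfl | h
    · simp [fin2_add_one_add_one]
    · simp [Function.update_of_ne h]
  ext x z
  rw [Matrix.mul_apply]
  simp only [XMat, Matrix.of_apply, ite_mul, one_mul, zero_mul]
  rw [Finset.sum_ite_eq' Finset.univ (Function.update x k (x k + 1))
    (fun y => if z = Function.update y k (y k + 1) then (1 : ℂ) else 0)]
  simp [Matrix.one_apply, fin2_add_one_add_one, Function.update_eq_self, eq_comm]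

lemma ZMat_mul_self (k : ι) : ZMat ι k * ZMat ι k = 1 := by
  have h : (fun i : ι → Fin 2 => (-1 : ℂ) ^ (i k : ℕ) * (-1) ^ (i k : ℕ)) = fun _ => 1 := by
    funext x
    rw [← pow_add, ← two_mul, pow_mul, neg_one_sq, one_pow]
  rw [ZMat, Matrix.diagonal_mul_diagonal, h, Matrix.diagonal_one]

lemma iMat_mul : (Complex.I • (1 : PMat ι)) * ((-Complex.I) • (1 : PMat ι)) = 1 := by
  rw [smul_mul_smul_comm]
  simp [Complex.I_mul_I]

lemma iMat_mul' : ((-Complex.I) • (1 : PMat ι)) * (Complex.I • (1 : PMat ι)) = 1 := by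
  rw [smul_mul_smul_comm]
  simp [Complex.I_mul_I]

/-- The scalar `i·I`, as a unit. -/
def iU : (PMat ι)ˣ := ⟨Complex.I • 1, (-Complex.I) • 1, iMat_mul ι, iMat_mul' ι⟩

/-- The operator `X k`, as a unit. -/
def XU (k : ι) : (PMat ι)ˣ := ⟨XMat ι k, XMat ι k, XMat_mul_self ι k, XMat_mul_self ι k⟩

/-- The operator `Z k`, as a unit. -/
def ZU (k : ι) : (PMat ι)ˣ := ⟨ZMat ι k, ZMat ι k, ZMat_mul_self ι k, ZMat_mul_self ι k⟩

/-- The Pauli group on the qubits indexed by `ι`: the subgroup of invertible operators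
generated by `i·I` and the `X k` and `Z k`. -/
def PauliGroup : Subgroup (PMat ι)ˣ :=
  Subgroup.closure ({iU ι} ∪ Set.range (XU ι) ∪ Set.range (ZU ι))

/-- The phase-free "almost Pauli group" `⟨X 1, Z 1, …, X n, Z n⟩`. -/
def PauliGroupNP : Subgroup (PMat ι)ˣ :=
  Subgroup.closure (Set.range (XU ι) ∪ Set.range (ZU ι))

lemma iU_mem : iU ι ∈ PauliGroup ι :=
  Subgroup.subset_closure (Or.inl (Or.inl rfl))

lemma XU_mem (k : ι) : XU ι k ∈ PauliGroup ι :=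
  Subgroup.subset_closure (Or.inl (Or.inr ⟨k, rfl⟩))

lemma ZU_mem (k : ι) : ZU ι k ∈ PauliGroup ι :=
  Subgroup.subset_closure (Or.inr ⟨k, rfl⟩)

lemma XU_memNP (k : ι) : XU ι k ∈ PauliGroupNP ι :=
  Subgroup.subset_closure (Or.inl ⟨k, rfl⟩)

lemma ZU_memNP (k : ι) : ZU ι k ∈ PauliGroupNP ι :=
  Subgroup.subset_closure (Or.inr ⟨k, rfl⟩)

/-- A stabilizer group: a subgroup of the Pauli group not containing `-I`. -/
structure IsStabilizer (S : Subgroup (PMat ι)ˣ) : Prop where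
  le : S ≤ PauliGroup ι
  neg_one_notMem : (-1 : (PMat ι)ˣ) ∉ S

/-- A subgroup has rank `r` if it admits a generating set of size `r` and no smaller one. -/
def HasRank {G : Type*} [Group G] (S : Subgroup G) (r : ℕ) : Prop :=
  (∃ T : Finset G, Subgroup.closure (T : Set G) = S ∧ T.card = r) ∧
    ∀ T : Finset G, Subgroup.closure (T : Set G) = S → r ≤ T.card

/-- The normalizer `N(S) = {p ∈ P_n : p S p⁻¹ = S}` of `S` in the Pauli group. -/
def NormIn (S : Subgroup (PMat ι)ˣ) : Subgroup (PMat ι)ˣ :=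
  Subgroup.normalizer (S : Set (PMat ι)ˣ) ⊓ PauliGroup ι

/-- The centralizer `C(S) = {p ∈ P_n : ∀ s ∈ S, p s = s p}` of `S` in the Pauli group. -/
def CentIn (S : Subgroup (PMat ι)ˣ) : Subgroup (PMat ι)ˣ :=
  Subgroup.centralizer (S : Set (PMat ι)ˣ) ⊓ PauliGroup ι

instance normIn_normal (S : Subgroup (PMat ι)ˣ) : (S.subgroupOf (NormIn ι S)).Normal := by
  constructor
  intro x hx g
  rw [Subgroup.mem_subgroupOf] at hx ⊢
  have hg : (g : (PMat ι)ˣ) ∈ Subgroup.normalizer (S : Set (PMat ι)ˣ) := (Subgroup.mem_inf.mp g.2).1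
  have h := (Subgroup.mem_normalizer_iff.mp hg (x : (PMat ι)ˣ)).mp hx
  simpa using h

/-- The logical Pauli group `N(S)/S`. -/
abbrev LogicalGroup (S : Subgroup (PMat ι)ˣ) :=
  ↥(NormIn ι S) ⧸ S.subgroupOf (NormIn ι S)

/-- A Pauli is Hermitian if its matrix equals its conjugate transpose. -/
def IsHermitianPauli (p : (PMat ι)ˣ) : Prop := (p : PMat ι).IsHermitian

/-- The weight of a Pauli: the number of qubits on which it acts non-trivially,
i.e. on which it fails to commute with `X k` or with `Z k`. -/
def weight (p : (PMat ι)ˣ) : ℕ :=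
  Nat.card {k : ι // ¬(Commute p (XU ι k) ∧ Commute p (ZU ι k))}

/-- The effect on a stabilizer group of measuring the Hermitian Pauli `p`,
post-selecting the outcome `+1`: `S ↦ ⟨p⟩·(S ∩ C(p))`. -/
def measUpdate (p : (PMat ι)ˣ) (S : Subgroup (PMat ι)ˣ) : Subgroup (PMat ι)ˣ :=
  Subgroup.closure {p} ⊔ (S ⊓ Subgroup.centralizer {p})

lemma iU_central (A : (PMat ι)ˣ) : iU ι * A = A * iU ι := by
  apply Units.ext
  show (Complex.I • (1 : PMat ι)) * (A : PMat ι) = (A : PMat ι) * (Complex.I • 1)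
  rw [smul_mul_assoc, one_mul, mul_smul_comm, mul_one]

lemma iU_mem_normIn (S : Subgroup (PMat ι)ˣ) : iU ι ∈ NormIn ι S := by
  refine Subgroup.mem_inf.mpr ⟨?_, iU_mem ι⟩
  rw [Subgroup.mem_normalizer_iff]
  intro h
  have : iU ι * h * (iU ι)⁻¹ = h := by
    rw [iU_central ι h, mul_assoc, mul_inv_cancel, mul_one]
  rw [this]



lemma rank_core {Γ : Type*} [Group Γ] (h2 : ∀ x : Γ, x * x = 1) :
    (∀ T : Finset Γ, Subgroup.closure (T : Set Γ) = ⊤ → Finite Γ) ∧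
    (Finite Γ → ∀ r : ℕ,
      (((∃ T : Finset Γ, Subgroup.closure (T : Set Γ) = ⊤ ∧ T.card = r) ∧
        ∀ T : Finset Γ, Subgroup.closure (T : Set Γ) = ⊤ → r ≤ T.card) ↔ Nat.card Γ = 2 ^ r)) := by
  classical
  have hcomm : ∀ x y : Γ, x * y = y * x := by
    intro x y
    have hinv : ∀ z : Γ, z⁻¹ = z := fun z => inv_eq_of_mul_eq_one_left (h2 z)
    calc x * y = (x * y)⁻¹ := (hinv _).symm
    _ = y⁻¹ * x⁻¹ := mul_inv_rev x y
    _ = y * x := by rw [hinv, hinv]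
  letI : AddCommGroup (Additive Γ) :=
    { (inferInstance : AddGroup (Additive Γ)) with
      add_comm := fun a b => hcomm a.toMul b.toMul }
  letI : Module (ZMod 2) (Additive Γ) := AddCommGroup.zmodModule (by
    intro x
    rw [two_nsmul]
    exact congrArg Additive.ofMul (h2 x.toMul))
  have corr : ∀ s : Set Γ, Subgroup.closure s = ⊤ ↔
      Submodule.span (ZMod 2) (Additive.toMul ⁻¹' s) = ⊤ := by
    intro s
    constructor
    · intro h
      rw [Submodule.eq_top_iff']
      intro x
      have hx : x.toMul ∈ Subgroup.closure s := by rw [h]; trivial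
      exact Subgroup.closure_induction (p := fun g _ =>
          Additive.ofMul g ∈ Submodule.span (ZMod 2) (Additive.toMul ⁻¹' s))
        (fun g hg => Submodule.subset_span (by simpa using hg))
        (Submodule.zero_mem _)
        (fun a b _ _ ha hb => Submodule.add_mem _ ha hb)
        (fun a _ ha => Submodule.neg_mem _ ha) hx
    · intro h
      rw [Subgroup.eq_top_iff']
      intro g
      have hx : Additive.ofMul g ∈ Submodule.span (ZMod 2) (Additive.toMul ⁻¹' s) := by
        rw [h]; trivial
      refine Submodule.span_induction (M := Additive Γ)
        (p := fun (x : Additive Γ) _ => Additive.toMul x ∈ Subgroup.closure s)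
        (fun x hxs => Subgroup.subset_closure hxs) (one_mem _)
        (fun a b _ _ ha hb => mul_mem ha hb) ?_ hx
      intro c x _ hxm
      have hc : c = 0 ∨ c = 1 := by revert c; decide
      rcases hc with rfl | rfl
      · rw [zero_smul]; exact one_mem _
      · rw [one_smul]; exact hxm
  have preim_eq : ∀ T : Finset Γ,
      (Additive.toMul ⁻¹' (T : Set Γ)) = Additive.ofMul '' (T : Set Γ) := by
    intro T
    ext x
    constructor
    · intro h; exact ⟨x.toMul, h, rfl⟩
    · rintro ⟨y, hy, rfl⟩; exact hy
  have preim_card : ∀ T : Finset Γ, (Additive.toMul ⁻¹' (T : Set Γ)).ncard = T.card := by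
    intro T
    rw [preim_eq, Set.ncard_image_of_injective _ Additive.ofMul.injective, Set.ncard_coe_finset]
  have hfin : ∀ T : Finset Γ, Subgroup.closure (T : Set Γ) = ⊤ → Finite Γ := by
    intro T hT
    have hs := (corr _).mp hT
    have : Module.Finite (ZMod 2) (Additive Γ) := by
      constructor
      refine ⟨T.image Additive.ofMul, ?_⟩
      have he : ((T.image Additive.ofMul : Finset (Additive Γ)) : Set (Additive Γ))
          = Additive.toMul ⁻¹' (T : Set Γ) := by
        rw [Finset.coe_image, preim_eq]
      rw [he, hs]
    have : Finite (Additive Γ) := Module.finite_of_finite (ZMod 2)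
    exact Finite.of_equiv _ Additive.toMul
  refine ⟨hfin, ?_⟩
  intro hΓfin r
  haveI : Finite (Additive Γ) := Finite.of_equiv _ Additive.ofMul
  letI : Fintype (Additive Γ) := Fintype.ofFinite _
  haveI : Module.Finite (ZMod 2) (Additive Γ) := Module.Finite.of_finite
  set d := Module.finrank (ZMod 2) (Additive Γ) with hd
  have hcard : Nat.card Γ = 2 ^ d := by
    have h := Module.card_eq_pow_finrank (K := ZMod 2) (V := Additive Γ)
    rw [ZMod.card] at h
    calc Nat.card Γ = Nat.card (Additive Γ) := Nat.card_congr Additive.ofMul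
    _ = Fintype.card (Additive Γ) := Nat.card_eq_fintype_card
    _ = 2 ^ d := h
  have hmin : ∀ T : Finset Γ, Subgroup.closure (T : Set Γ) = ⊤ → d ≤ T.card := by
    intro T hT
    have hs := (corr _).mp hT
    haveI : Fintype (Additive.toMul ⁻¹' (T : Set Γ)) := Fintype.ofFinite _
    have h1 := finrank_span_le_card (R := ZMod 2) (Additive.toMul ⁻¹' (T : Set Γ))
    rw [hs, finrank_top] at h1
    rwa [← Set.ncard_eq_toFinset_card', preim_card] at h1
  have hex : ∃ T : Finset Γ, Subgroup.closure (T : Set Γ) = ⊤ ∧ T.card = d := by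
    let b := Module.finBasis (ZMod 2) (Additive Γ)
    have hbinj : Function.Injective (fun i => (b i).toMul) :=
      fun i j hij => b.injective (Additive.toMul.injective hij)
    refine ⟨Finset.image (fun i => (b i).toMul) Finset.univ, ?_, ?_⟩
    · rw [corr]
      have he : Additive.toMul ⁻¹'
          ((Finset.image (fun i => (b i).toMul) Finset.univ : Finset Γ) : Set Γ)
          = Set.range b := by
        ext x
        simp only [Set.mem_preimage, Finset.coe_image, Set.mem_image, Finset.mem_coe,
          Finset.mem_univ, Set.mem_range, Finset.coe_univ, Set.image_univ]
        constructor
        · rintro ⟨i, hi⟩; exact ⟨i, Additive.toMul.injective hi⟩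
        · rintro ⟨i, rfl⟩; exact ⟨i, rfl⟩
      rw [he, b.span_eq]
    · rw [Finset.card_image_of_injective _ hbinj, Finset.card_univ, Fintype.card_fin]
  constructor
  · rintro ⟨⟨T, hT, hTc⟩, hmin'⟩
    obtain ⟨Td, hTd, hTdc⟩ := hex
    have h1 : r ≤ d := hTdc ▸ hmin' Td hTd
    have h2 : d ≤ r := hTc ▸ hmin T hT
    rw [hcard, Nat.le_antisymm h2 h1]
  · intro hc
    have hpow : (2:ℕ) ^ r = 2 ^ d := by rw [← hc, hcard]
    have hrd : r = d := Nat.pow_right_injective (le_refl 2) hpow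
    subst hrd
    exact ⟨hex, hmin⟩

lemma hasRank_iff_top {G : Type*} [Group G] (H : Subgroup G) (r : ℕ) :
    HasRank H r ↔
      ((∃ T : Finset ↥H, Subgroup.closure (T : Set ↥H) = ⊤ ∧ T.card = r) ∧
        ∀ T : Finset ↥H, Subgroup.closure (T : Set ↥H) = ⊤ → r ≤ T.card) := by
  classical
  have hinj : Function.Injective ((↑) : ↥H → G) := Subtype.coe_injective
  have key : ∀ T' : Finset ↥H,
      Subgroup.closure (((T'.image ((↑) : ↥H → G)) : Finset G) : Set G) = H
        ↔ Subgroup.closure (T' : Set ↥H) = ⊤ := by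
    intro T'
    have himg : Subgroup.closure (((T'.image ((↑) : ↥H → G)) : Finset G) : Set G)
        = Subgroup.map H.subtype (Subgroup.closure (T' : Set ↥H)) := by
      rw [MonoidHom.map_closure]
      congr 1
      simp [Finset.coe_image]
    have htop : Subgroup.map H.subtype (⊤ : Subgroup ↥H) = H := by
      rw [← MonoidHom.range_eq_map, Subgroup.range_subtype]
    constructor
    · intro h
      apply Subgroup.map_injective (f := H.subtype) H.subtype_injective
      rw [← himg, h, htop]
    · intro h
      rw [himg, h, htop]
  constructor
  · rintro ⟨⟨T, hT, hTc⟩, hmin⟩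
    have hTH : (T : Set G) ⊆ (H : Set G) := hT ▸ Subgroup.subset_closure
    set T' : Finset ↥H := T.preimage ((↑) : ↥H → G) hinj.injOn with hT'
    have himage : T'.image ((↑) : ↥H → G) = T := by
      ext x
      simp only [hT', Finset.mem_image, Finset.mem_preimage]
      constructor
      · rintro ⟨y, hy, rfl⟩; exact hy
      · intro hx; exact ⟨⟨x, hTH hx⟩, hx, rfl⟩
    have hcard : T'.card = T.card := by
      rw [← himage, Finset.card_image_of_injective _ hinj]
    refine ⟨⟨T', ?_, hcard.trans hTc⟩, ?_⟩
    · rw [← key, himage]; exact hT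
    · intro U hU
      have := hmin (U.image ((↑) : ↥H → G)) ((key U).mpr hU)
      rwa [Finset.card_image_of_injective _ hinj] at this
  · rintro ⟨⟨T', hT', hT'c⟩, hmin⟩
    refine ⟨⟨T'.image ((↑) : ↥H → G), (key T').mpr hT',
      by rw [Finset.card_image_of_injective _ hinj, hT'c]⟩, ?_⟩
    intro T hT
    have hTH : (T : Set G) ⊆ (H : Set G) := hT ▸ Subgroup.subset_closure
    set U : Finset ↥H := T.preimage ((↑) : ↥H → G) hinj.injOn with hU
    have himage : U.image ((↑) : ↥H → G) = T := by
      ext x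
      simp only [hU, Finset.mem_image, Finset.mem_preimage]
      constructor
      · rintro ⟨y, hy, rfl⟩; exact hy
      · intro hx; exact ⟨⟨x, hTH hx⟩, hx, rfl⟩
    have hcard : U.card = T.card := by
      rw [← himage, Finset.card_image_of_injective _ hinj]
    rw [← hcard]
    exact hmin U (by rw [← key, himage]; exact hT)

/-- Combined: a subgroup all of whose elements square to 1, with a finite generating set,
is finite; and once finite, `HasRank H r ↔ Nat.card H = 2 ^ r`. -/
lemma finite_of_closure {G : Type*} [Group G] (H : Subgroup G)
    (h2 : ∀ x ∈ H, x * x = 1) (T : Finset G) (hT : Subgroup.closure (T : Set G) = H) :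
    Finite ↥H := by
  classical
  have h2' : ∀ x : ↥H, x * x = 1 := fun x => Subtype.ext (h2 x x.2)
  have hTH : (T : Set G) ⊆ (H : Set G) := hT ▸ Subgroup.subset_closure
  have hinj : Function.Injective ((↑) : ↥H → G) := Subtype.coe_injective
  set T' : Finset ↥H := T.preimage ((↑) : ↥H → G) hinj.injOn with hT'def
  have himage : T'.image ((↑) : ↥H → G) = T := by
    ext x
    simp only [hT'def, Finset.mem_image, Finset.mem_preimage]
    constructor
    · rintro ⟨y, hy, rfl⟩; exact hy
    · intro hx; exact ⟨⟨x, hTH hx⟩, hx, rfl⟩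
  have htop : Subgroup.closure (T' : Set ↥H) = ⊤ := by
    have himg : Subgroup.closure (((T'.image ((↑) : ↥H → G)) : Finset G) : Set G)
        = Subgroup.map H.subtype (Subgroup.closure (T' : Set ↥H)) := by
      rw [MonoidHom.map_closure]
      congr 1
      simp [Finset.coe_image]
    apply Subgroup.map_injective (f := H.subtype) H.subtype_injective
    rw [← himg, himage, hT, ← MonoidHom.range_eq_map, Subgroup.range_subtype]
  exact (rank_core h2').1 T' htop

lemma hasRank_iff_card {G : Type*} [Group G] (H : Subgroup G)
    (h2 : ∀ x ∈ H, x * x = 1) (hfin : Finite ↥H) (r : ℕ) :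
    HasRank H r ↔ Nat.card ↥H = 2 ^ r := by
  have h2' : ∀ x : ↥H, x * x = 1 := fun x => Subtype.ext (h2 x x.2)
  rw [hasRank_iff_top]
  exact (rank_core h2').2 hfin r

lemma sup_coe_adjoin {G : Type*} [Group G] (H : Subgroup G) (p : G) (hp2 : p * p = 1)
    (hcomm : ∀ h ∈ H, p * h = h * p) :
    ((Subgroup.closure {p} ⊔ H : Subgroup G) : Set G)
      = (H : Set G) ∪ (fun h => p * h) '' (H : Set G) := by
  have hpinv : p⁻¹ = p := inv_eq_of_mul_eq_one_left hp2
  let K : Subgroup G :=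
    { carrier := (H : Set G) ∪ (fun h => p * h) '' (H : Set G)
      one_mem' := Or.inl H.one_mem
      mul_mem' := by
        rintro a b (ha | ⟨a', ha', rfl⟩) (hb | ⟨b', hb', rfl⟩)
        · exact Or.inl (H.mul_mem ha hb)
        · refine Or.inr ⟨a * b', H.mul_mem ha hb', ?_⟩
          rw [← mul_assoc, ← hcomm a ha, mul_assoc]
        · exact Or.inr ⟨a' * b, H.mul_mem ha' hb, by rw [mul_assoc]⟩
        · refine Or.inl ?_
          have : p * a' * (p * b') = a' * b' := by
            rw [hcomm a' ha', mul_assoc, ← mul_assoc p p b', hp2, one_mul]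
          rw [this]
          exact H.mul_mem ha' hb'
      inv_mem' := by
        rintro a (ha | ⟨a', ha', rfl⟩)
        · exact Or.inl (H.inv_mem ha)
        · refine Or.inr ⟨a'⁻¹, H.inv_mem ha', ?_⟩
          show p * a'⁻¹ = (p * a')⁻¹
          rw [_root_.mul_inv_rev, hpinv, hcomm a'⁻¹ (H.inv_mem ha')] }
  have hK : Subgroup.closure {p} ⊔ H = K := by
    apply le_antisymm
    · refine sup_le ?_ ?_
      · rw [Subgroup.closure_le]
        intro x hx
        rw [Set.mem_singleton_iff] at hx
        subst hx
        exact Or.inr ⟨1, H.one_mem, mul_one x⟩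
      · intro x hx
        exact Or.inl hx
    · rintro x (hx | ⟨h, hh, rfl⟩)
      · exact Subgroup.mem_sup_right hx
      · exact Subgroup.mul_mem _
          (Subgroup.mem_sup_left (Subgroup.subset_closure rfl))
          (Subgroup.mem_sup_right hh)
  rw [hK]
  rfl

lemma card_adjoin {G : Type*} [Group G] (H : Subgroup G) (p : G) (hp2 : p * p = 1)
    (hcomm : ∀ h ∈ H, p * h = h * p) (hpH : p ∉ H) (hfin : Finite ↥H) :
    Nat.card ↥(Subgroup.closure {p} ⊔ H) = 2 * Nat.card ↥H := by
  have hcoe := sup_coe_adjoin H p hp2 hcomm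
  have hHfin : (H : Set G).Finite := Set.toFinite _
  have hdisj : Disjoint (H : Set G) ((fun h => p * h) '' (H : Set G)) := by
    rw [Set.disjoint_left]
    rintro x hx ⟨h, hh, rfl⟩
    exact hpH (by simpa using H.mul_mem hx (H.inv_mem hh))
  have h1 : Nat.card ↥(Subgroup.closure {p} ⊔ H)
      = ((H : Set G) ∪ (fun h => p * h) '' (H : Set G)).ncard := by
    rw [← Nat.card_coe_set_eq, ← hcoe]
    rfl
  rw [h1, Set.ncard_union_eq hdisj hHfin (hHfin.image _),
    Set.ncard_image_of_injective _ (mul_right_injective p),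
    ← Nat.card_coe_set_eq, two_mul]
  rfl


lemma fl_fl (k : ι) (x : ι → Fin 2) :
    Function.update (Function.update x k (x k + 1)) k
      (Function.update x k (x k + 1) k + 1) = x := by
  ext j
  rcases eq_or_ne j k with rfl | h
  · simp [fin2_add_one_add_one]
  · simp [Function.update_of_ne h]

lemma fl_comm {j k : ι} (h : j ≠ k) (x : ι → Fin 2) :
    Function.update (Function.update x j (x j + 1)) k
        (Function.update x j (x j + 1) k + 1)
      = Function.update (Function.update x k (x k + 1)) j
        (Function.update x k (x k + 1) j + 1) := by
  rw [Function.update_of_ne h.symm, Function.update_of_ne h]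
  exact Function.update_comm h _ _ _

lemma XMat_mul_apply (k : ι) (A : PMat ι) (x y : ι → Fin 2) :
    (XMat ι k * A) x y = A (Function.update x k (x k + 1)) y := by
  rw [Matrix.mul_apply]
  simp only [XMat, Matrix.of_apply, ite_mul, one_mul, zero_mul]
  rw [Finset.sum_ite_eq' Finset.univ _ (fun z => A z y)]
  exact if_pos (Finset.mem_univ _)

lemma XU_comm (j k : ι) : XU ι j * XU ι k = XU ι k * XU ι j := by
  apply Units.ext
  show XMat ι j * XMat ι k = XMat ι k * XMat ι j
  ext x y
  rw [XMat_mul_apply, XMat_mul_apply]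
  rcases eq_or_ne j k with rfl | hjk
  · rfl
  · simp only [XMat, Matrix.of_apply]
    refine if_congr ?_ rfl rfl
    rw [fl_comm ι hjk]

lemma ZU_comm (j k : ι) : ZU ι j * ZU ι k = ZU ι k * ZU ι j := by
  apply Units.ext
  show ZMat ι j * ZMat ι k = ZMat ι k * ZMat ι j
  simp only [ZMat, Matrix.diagonal_mul_diagonal]
  have : (fun i : ι → Fin 2 => ((-1:ℂ)) ^ ((i j : Fin 2) : ℕ) * (-1) ^ ((i k : Fin 2) : ℕ))
      = (fun i : ι → Fin 2 => ((-1:ℂ)) ^ ((i k : Fin 2) : ℕ) * (-1) ^ ((i j : Fin 2) : ℕ)) := by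
    funext i; ring
  rw [this]

lemma XU_ZU_comm {j k : ι} (h : j ≠ k) : XU ι j * ZU ι k = ZU ι k * XU ι j := by
  apply Units.ext
  show XMat ι j * ZMat ι k = ZMat ι k * XMat ι j
  ext x y
  simp only [ZMat]
  rw [Matrix.mul_diagonal, Matrix.diagonal_mul]
  by_cases hxy : y = Function.update x j (x j + 1)
  · subst hxy
    rw [Function.update_of_ne h.symm]
    ring
  · simp only [XMat, Matrix.of_apply, if_neg hxy]
    ring

lemma neg_one_pow_fin2 : ∀ a : Fin 2, ((-1 : ℂ)) ^ ((a + 1 : Fin 2) : ℕ) = -((-1 : ℂ)) ^ ((a : Fin 2) : ℕ) := by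
  intro a
  fin_cases a
  · show ((-1:ℂ)) ^ (1:ℕ) = -((-1:ℂ)) ^ (0:ℕ)
    norm_num
  · show ((-1:ℂ)) ^ (0:ℕ) = -((-1:ℂ)) ^ (1:ℕ)
    norm_num

lemma XU_ZU_anticomm (k : ι) : XU ι k * ZU ι k = -(ZU ι k * XU ι k) := by
  apply Units.ext
  rw [Units.val_neg]
  show XMat ι k * ZMat ι k = -(ZMat ι k * XMat ι k)
  ext x y
  simp only [ZMat, Matrix.neg_apply]
  rw [Matrix.mul_diagonal, Matrix.diagonal_mul]
  by_cases hxy : y = Function.update x k (x k + 1)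
  · subst hxy
    rw [Function.update_self, neg_one_pow_fin2]
    ring
  · simp only [XMat, Matrix.of_apply, if_neg hxy]
    ring

lemma units_ne_neg (x : (PMat ι)ˣ) : x ≠ -x := by
  intro h
  have h1 : (1 : (PMat ι)ˣ) = -1 := by
    have h2 := congrArg (fun z => z * x⁻¹) h
    simpa [neg_mul] using h2
  have h2 : (1 : PMat ι) = -(1 : PMat ι) := by
    have := congrArg Units.val h1
    rwa [Units.val_neg, Units.val_one] at this
  have h3 := congrFun (congrFun h2 (fun _ => 0)) (fun _ => 0)
  rw [Matrix.neg_apply, Matrix.one_apply_eq] at h3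
  norm_num at h3

lemma gen_pairs : ∀ x ∈ ({iU ι} ∪ Set.range (XU ι) ∪ Set.range (ZU ι)),
    ∀ y ∈ ({iU ι} ∪ Set.range (XU ι) ∪ Set.range (ZU ι)),
    x * y = y * x ∨ x * y = -(y * x) := by
  rintro x ((rfl | ⟨j, rfl⟩) | ⟨j, rfl⟩) y hy
  · exact Or.inl (iU_central ι y)
  · rcases hy with (rfl | ⟨k, rfl⟩) | ⟨k, rfl⟩
    · exact Or.inl (iU_central ι (XU ι j)).symm
    · exact Or.inl (XU_comm ι j k)
    · rcases eq_or_ne j k with rfl | hjk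
      · exact Or.inr (XU_ZU_anticomm ι j)
      · exact Or.inl (XU_ZU_comm ι hjk)
  · rcases hy with (rfl | ⟨k, rfl⟩) | ⟨k, rfl⟩
    · exact Or.inl (iU_central ι (ZU ι j)).symm
    · rcases eq_or_ne k j with rfl | hkj
      · right
        rw [XU_ZU_anticomm ι k, neg_neg]
      · exact Or.inl (XU_ZU_comm ι hkj).symm
    · exact Or.inl (ZU_comm ι j k)

lemma pauli_pairs : ∀ p ∈ PauliGroup ι, ∀ q ∈ PauliGroup ι,
    p * q = q * p ∨ p * q = -(q * p) := by
  have hsymm : ∀ a b : (PMat ι)ˣ, (a * b = b * a ∨ a * b = -(b * a)) →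
      (b * a = a * b ∨ b * a = -(a * b)) := by
    rintro a b (h | h)
    · exact Or.inl h.symm
    · right; rw [h, neg_neg]
  have hmul : ∀ a b c : (PMat ι)ˣ, (a * c = c * a ∨ a * c = -(c * a)) →
      (b * c = c * b ∨ b * c = -(c * b)) →
      (a * b * c = c * (a * b) ∨ a * b * c = -(c * (a * b))) := by
    rintro a b c (h1 | h1) (h2 | h2)
    · left; rw [mul_assoc, h2, ← mul_assoc, h1, mul_assoc]
    · right; rw [mul_assoc, h2, mul_neg, ← mul_assoc, h1, mul_assoc]
    · right; rw [mul_assoc, h2, ← mul_assoc, h1, neg_mul, mul_assoc]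
    · left; rw [mul_assoc, h2, mul_neg, ← mul_assoc, h1, neg_mul, neg_neg, mul_assoc]
  have hinv : ∀ a c : (PMat ι)ˣ, (a * c = c * a ∨ a * c = -(c * a)) →
      (a⁻¹ * c = c * a⁻¹ ∨ a⁻¹ * c = -(c * a⁻¹)) := by
    rintro a c (h | h)
    · left
      exact (Commute.inv_left h : _)
    · right
      have h1 : c * a⁻¹ = -(a⁻¹ * c) := by
        calc c * a⁻¹ = a⁻¹ * (a * c) * a⁻¹ := by rw [inv_mul_cancel_left]
        _ = a⁻¹ * (-(c * a)) * a⁻¹ := by rw [h]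
        _ = -(a⁻¹ * c) := by
            rw [mul_neg, neg_mul, ← mul_assoc, mul_assoc (a⁻¹ * c), mul_inv_cancel, mul_one]
      rw [h1, neg_neg]
  have step1 : ∀ q ∈ ({iU ι} ∪ Set.range (XU ι) ∪ Set.range (ZU ι)),
      ∀ p ∈ PauliGroup ι, p * q = q * p ∨ p * q = -(q * p) := by
    intro q hq p hp
    refine Subgroup.closure_induction (k := {iU ι} ∪ Set.range (XU ι) ∪ Set.range (ZU ι))
      (p := fun g _ => g * q = q * g ∨ g * q = -(q * g))
      (fun x hx => gen_pairs ι x hx q hq)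
      (Or.inl (by rw [one_mul, mul_one]))
      (fun a b _ _ ha hb => hmul a b q ha hb)
      (fun a _ ha => hinv a q ha) hp
  intro p hp q hq
  refine Subgroup.closure_induction (k := {iU ι} ∪ Set.range (XU ι) ∪ Set.range (ZU ι))
    (p := fun g _ => p * g = g * p ∨ p * g = -(g * p))
    (fun x hx => step1 x hx p hp)
    (Or.inl (by rw [one_mul, mul_one]))
    (fun a b _ _ ha hb => hsymm _ _ (hmul a b p (hsymm _ _ ha) (hsymm _ _ hb)))
    (fun a _ ha => hsymm _ _ (hinv a p (hsymm _ _ ha))) hq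

lemma pauli_star : ∀ p ∈ PauliGroup ι,
    star ((p : (PMat ι)ˣ) : PMat ι) = ((p⁻¹ : (PMat ι)ˣ) : PMat ι) := by
  intro p hp
  refine Subgroup.closure_induction
    (p := fun g _ => star ((g : (PMat ι)ˣ) : PMat ι) = ((g⁻¹ : (PMat ι)ˣ) : PMat ι))
    ?_ ?_ ?_ ?_ hp
  · rintro x ((rfl | ⟨k, rfl⟩) | ⟨k, rfl⟩)
    · show star ((Complex.I : ℂ) • (1 : PMat ι)) = (-Complex.I : ℂ) • (1 : PMat ι)
      rw [star_smul, star_one, Complex.star_def, Complex.conj_I]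
    · show star (XMat ι k) = XMat ι k
      rw [Matrix.star_eq_conjTranspose]
      ext x y
      rw [Matrix.conjTranspose_apply]
      simp only [XMat, Matrix.of_apply]
      rw [apply_ite star, star_one, star_zero]
      refine if_congr ?_ rfl rfl
      constructor
      · rintro rfl; exact (fl_fl ι k y).symm
      · rintro rfl; exact (fl_fl ι k x).symm
    · show star (ZMat ι k) = ZMat ι k
      rw [Matrix.star_eq_conjTranspose]
      simp only [ZMat, Matrix.diagonal_conjTranspose]
      have : (star (fun x : ι → Fin 2 => ((-1:ℂ)) ^ ((x k : Fin 2) : ℕ)))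
          = fun x : ι → Fin 2 => ((-1:ℂ)) ^ ((x k : Fin 2) : ℕ) := by
        funext x
        show star ((-1 : ℂ) ^ ((x k : Fin 2) : ℕ)) = _
        rw [star_pow, star_neg, star_one]
      rw [this]
  · show star ((1 : (PMat ι)ˣ) : PMat ι) = (((1 : (PMat ι)ˣ)⁻¹ : (PMat ι)ˣ) : PMat ι)
    rw [Units.val_one, star_one, inv_one, Units.val_one]
  · intro a b _ _ ha hb
    show star (((a * b : (PMat ι)ˣ) : PMat ι)) = (((a * b)⁻¹ : (PMat ι)ˣ) : PMat ι)
    rw [Units.val_mul, StarMul.star_mul, ha, hb, _root_.mul_inv_rev, Units.val_mul]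
  · intro a _ ha
    show star (((a⁻¹ : (PMat ι)ˣ) : PMat ι)) = (((a⁻¹⁻¹ : (PMat ι)ˣ) : PMat ι))
    rw [← ha, star_star, inv_inv]

lemma pauli_sq : ∀ p ∈ PauliGroup ι, p * p = 1 ∨ p * p = -1 := by
  intro p hp
  refine Subgroup.closure_induction
    (p := fun g _ => g * g = 1 ∨ g * g = -1) ?_ (Or.inl (one_mul 1)) ?_ ?_ hp
  · rintro x ((rfl | ⟨k, rfl⟩) | ⟨k, rfl⟩)
    · right
      apply Units.ext
      rw [Units.val_mul, Units.val_neg, Units.val_one]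
      show (Complex.I : ℂ) • (1 : PMat ι) * (Complex.I : ℂ) • (1 : PMat ι) = -1
      rw [smul_mul_smul_comm, Complex.I_mul_I, one_mul, neg_smul, one_smul]
    · exact Or.inl (Units.ext (XMat_mul_self ι k))
    · exact Or.inl (Units.ext (ZMat_mul_self ι k))
  · intro a b ha' hb' ha2 hb2
    have hba := pauli_pairs ι b hb' a ha'
    rcases hba with h | h
    · have key : a * b * (a * b) = a * a * (b * b) := by
        rw [mul_assoc, ← mul_assoc b a b, h, mul_assoc a b b, ← mul_assoc]
      rcases ha2 with h1 | h1 <;> rcases hb2 with h2 | h2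
      · left; rw [key, h1, h2, one_mul]
      · right; rw [key, h1, h2, one_mul]
      · right; rw [key, h1, h2, mul_one]
      · left; rw [key, h1, h2, neg_mul_neg, one_mul]
    · have key : a * b * (a * b) = -(a * a * (b * b)) := by
        rw [mul_assoc, ← mul_assoc b a b, h, neg_mul, mul_neg, mul_assoc a b b, ← mul_assoc]
      rcases ha2 with h1 | h1 <;> rcases hb2 with h2 | h2
      · right; rw [key, h1, h2, one_mul]
      · left; rw [key, h1, h2, one_mul, neg_neg]
      · left; rw [key, h1, h2, mul_one, neg_neg]
      · right; rw [key, h1, h2, neg_mul_neg, one_mul]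
  · intro a _ ha
    have hneg : ((-1 : (PMat ι)ˣ))⁻¹ = -1 :=
      inv_eq_of_mul_eq_one_right (by rw [neg_mul_neg, one_mul])
    rcases ha with h | h
    · left; rw [← _root_.mul_inv_rev, h, inv_one]
    · right; rw [← _root_.mul_inv_rev, h, hneg]


/-- Measuring a Hermitian Pauli `p` (post-selecting outcome `+1`, with `-p ∉ S`) updates a
stabilizer group `S` of rank `r` to the stabilizer group `S' = ⟨p⟩·(S ∩ C(p))`, whose rank
is `r + 1` if `p ∈ C(S) \ S` and `r` otherwise; in particular the number of logical qubits
never increases and decreases by at most one. -/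
theorem measUpdate_isStabilizer_and_rank (n r : ℕ) (S : Subgroup (PMat (Fin n))ˣ)
    (hS : IsStabilizer (Fin n) S) (hr : HasRank S r)
    (p : (PMat (Fin n))ˣ) (hp : p ∈ PauliGroup (Fin n)) (hherm : IsHermitianPauli (Fin n) p)
    (hnpS : -p ∉ S) :
    IsStabilizer (Fin n) (measUpdate (Fin n) p S) ∧
    ((p ∈ Subgroup.centralizer (S : Set (PMat (Fin n))ˣ) ∧ p ∉ S) →
      HasRank (measUpdate (Fin n) p S) (r + 1)) ∧
    (¬(p ∈ Subgroup.centralizer (S : Set (PMat (Fin n))ˣ) ∧ p ∉ S) →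
      HasRank (measUpdate (Fin n) p S) r) := by
  classical
  have hD := pauli_pairs (Fin n)
  have hsq := pauli_sq (Fin n)
  have hstar := pauli_star (Fin n)
  have hpinv : p⁻¹ = p := by
    apply Units.ext
    have h1 := hstar p hp
    rw [Matrix.star_eq_conjTranspose] at h1
    rw [← h1]
    exact hherm
  have hp2 : p * p = 1 := by
    nth_rewrite 1 [← hpinv]
    exact inv_mul_cancel p
  have hS2 : ∀ x ∈ S, x * x = 1 := by
    intro x hx
    rcases hsq x (hS.le hx) with h | h
    · exact h
    · exact absurd (h ▸ mul_mem hx hx) hS.neg_one_notMem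
  have hSab : ∀ x ∈ S, ∀ y ∈ S, x * y = y * x := by
    intro x hx y hy
    rcases hD x (hS.le hx) y (hS.le hy) with h | h
    · exact h
    · exfalso
      apply hS.neg_one_notMem
      have hmem : x * y * (y * x)⁻¹ ∈ S :=
        mul_mem (mul_mem hx hy) (inv_mem (mul_mem hy hx))
      have he : x * y * (y * x)⁻¹ = -1 := by rw [h, neg_mul, mul_inv_cancel]
      rwa [he] at hmem
  have hfinS : Finite ↥S := by
    obtain ⟨T, hT, _⟩ := hr.1
    exact finite_of_closure S hS2 T hT
  have hcardS : Nat.card ↥S = 2 ^ r := (hasRank_iff_card S hS2 hfinS r).mp hr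
  have memCp : ∀ g : (PMat (Fin n))ˣ, g ∈ Subgroup.centralizer {p} ↔ p * g = g * p := by
    intro g
    rw [Subgroup.mem_centralizer_iff]
    simp
  by_cases hpS : p ∈ S
  · -- Case A : p ∈ S, update is trivial
    have hCpS : S ≤ Subgroup.centralizer {p} :=
      fun s hs => (memCp s).mpr (hSab p hpS s hs)
    have hclS : Subgroup.closure {p} ≤ S :=
      (Subgroup.closure_le S).mpr (Set.singleton_subset_iff.mpr hpS)
    have hMU : measUpdate (Fin n) p S = S := by
      unfold measUpdate
      rw [inf_eq_left.mpr hCpS, sup_eq_right.mpr hclS]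
    refine ⟨?_, ?_, ?_⟩
    · rw [hMU]; exact hS
    · intro hcond; exact absurd hpS hcond.2
    · intro _; rw [hMU]; exact hr
  · by_cases hpC : p ∈ Subgroup.centralizer (S : Set (PMat (Fin n))ˣ)
    · -- Case B : p ∈ C(S) \ S, rank r + 1
      have hcomm : ∀ h ∈ S, p * h = h * p :=
        fun s hs => (Subgroup.mem_centralizer_iff.mp hpC s hs).symm
      have hSC : S ⊓ Subgroup.centralizer {p} = S :=
        inf_eq_left.mpr (fun s hs => (memCp s).mpr (hcomm s hs))
      have hMU : measUpdate (Fin n) p S = Subgroup.closure {p} ⊔ S := by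
        unfold measUpdate
        rw [hSC]
      have hset := sup_coe_adjoin S p hp2 hcomm
      have hneg : (-1 : (PMat (Fin n))ˣ) ∉ Subgroup.closure {p} ⊔ S := by
        intro hmem
        have hmem' : (-1 : (PMat (Fin n))ˣ)
            ∈ ((Subgroup.closure {p} ⊔ S : Subgroup (PMat (Fin n))ˣ) : Set (PMat (Fin n))ˣ) := hmem
        rw [hset] at hmem'
        rcases hmem' with h | ⟨h, hh, heq⟩
        · exact hS.neg_one_notMem h
        · apply hnpS
          have hpe : h = -p := by
            have h2 := congrArg (fun z => p * z) heq
            simp only at h2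
            rwa [← mul_assoc, hp2, one_mul, mul_neg, mul_one] at h2
          exact hpe ▸ hh
      have hle : Subgroup.closure {p} ⊔ S ≤ PauliGroup (Fin n) :=
        sup_le ((Subgroup.closure_le _).mpr (Set.singleton_subset_iff.mpr hp)) hS.le
      have hS'2 : ∀ x ∈ Subgroup.closure {p} ⊔ S, x * x = 1 := by
        intro x hx
        rcases hsq x (hle hx) with h | h
        · exact h
        · exact absurd (h ▸ mul_mem hx hx) hneg
      have hSfin : (S : Set (PMat (Fin n))ˣ).Finite := Set.finite_coe_iff.mp hfinS
      have hfinS' : Finite ↥(Subgroup.closure {p} ⊔ S) := by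
        have hUfin : ((Subgroup.closure {p} ⊔ S : Subgroup (PMat (Fin n))ˣ)
            : Set (PMat (Fin n))ˣ).Finite := by
          rw [hset]
          exact hSfin.union (hSfin.image _)
        exact Set.finite_coe_iff.mpr hUfin
      have hcard : Nat.card ↥(Subgroup.closure {p} ⊔ S) = 2 ^ (r + 1) := by
        rw [card_adjoin S p hp2 hcomm hpS hfinS, hcardS, pow_succ, mul_comm]
      refine ⟨?_, ?_, ?_⟩
      · rw [hMU]; exact ⟨hle, hneg⟩
      · intro _
        rw [hMU]
        exact (hasRank_iff_card _ hS'2 hfinS' (r + 1)).mpr hcard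
      · intro hcond; exact absurd ⟨hpC, hpS⟩ hcond
    · -- Case C : p ∉ C(S), rank r
      obtain ⟨s₀, hs₀S, hanti⟩ : ∃ s₀ ∈ S, p * s₀ = -(s₀ * p) := by
        by_contra hcon
        push_neg at hcon
        apply hpC
        rw [Subgroup.mem_centralizer_iff]
        intro s hs
        rcases hD p hp s (hS.le hs) with h | h
        · exact h.symm
        · exact absurd h (hcon s hs)
      set H := S ⊓ Subgroup.centralizer {p} with hH
      have hcommH : ∀ h ∈ H, p * h = h * p :=
        fun h hh => (memCp h).mp (Subgroup.mem_inf.mp hh).2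
      have hpH : p ∉ H := fun hmem => hpS (Subgroup.mem_inf.mp hmem).1
      have hSfin : (S : Set (PMat (Fin n))ˣ).Finite := Set.finite_coe_iff.mp hfinS
      have hHfin : (H : Set (PMat (Fin n))ˣ).Finite :=
        hSfin.subset (fun x hx => (Subgroup.mem_inf.mp hx).1)
      have hfinH : Finite ↥H := Set.finite_coe_iff.mpr hHfin
      have hasym : p * s₀ ≠ s₀ * p := by
        intro h
        rw [h] at hanti
        exact units_ne_neg (Fin n) (s₀ * p) hanti
      have hpart : (S : Set (PMat (Fin n))ˣ)
          = (H : Set (PMat (Fin n))ˣ) ∪ (fun h => s₀ * h) '' (H : Set (PMat (Fin n))ˣ) := by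
        ext x
        constructor
        · intro hx
          rcases hD p hp x (hS.le hx) with h | h
          · exact Or.inl (Subgroup.mem_inf.mpr ⟨hx, (memCp x).mpr h⟩)
          · refine Or.inr ⟨s₀⁻¹ * x, Subgroup.mem_inf.mpr ⟨mul_mem (inv_mem hs₀S) hx, ?_⟩, ?_⟩
            · rw [memCp]
              have hinv' : p * s₀⁻¹ = -(s₀⁻¹ * p) := by
                have h1 : s₀⁻¹ * (p * s₀) * s₀⁻¹ = -(s₀⁻¹ * (s₀ * p) * s₀⁻¹) := by
                  rw [hanti, mul_neg, neg_mul]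
                rw [inv_mul_cancel_left] at h1
                have h2 : s₀⁻¹ * (p * s₀) * s₀⁻¹ = s₀⁻¹ * p := by
                  rw [← mul_assoc, mul_assoc (s₀⁻¹ * p), mul_inv_cancel, mul_one]
                rw [h2] at h1
                rw [h1, neg_neg]
              rw [← mul_assoc, hinv', neg_mul, mul_assoc, h, mul_neg, neg_neg, ← mul_assoc]
            · show s₀ * (s₀⁻¹ * x) = x
              rw [mul_inv_cancel_left]
        · rintro (hx | ⟨h, hh, rfl⟩)
          · exact (Subgroup.mem_inf.mp hx).1
          · exact mul_mem hs₀S (Subgroup.mem_inf.mp hh).1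
      have hdisj : Disjoint (H : Set (PMat (Fin n))ˣ)
          ((fun h => s₀ * h) '' (H : Set (PMat (Fin n))ˣ)) := by
        rw [Set.disjoint_left]
        rintro x hx ⟨h, hh, rfl⟩
        have h1 : p * (s₀ * h) = s₀ * h * p := (memCp _).mp (Subgroup.mem_inf.mp hx).2
        have h2 : p * h = h * p := (memCp _).mp (Subgroup.mem_inf.mp hh).2
        apply hasym
        calc p * s₀ = p * (s₀ * h) * h⁻¹ := by
              rw [← mul_assoc p s₀ h, mul_assoc, mul_inv_cancel, mul_one]
        _ = s₀ * h * p * h⁻¹ := by rw [h1]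
        _ = s₀ * (h * p) * h⁻¹ := by rw [mul_assoc s₀ h p]
        _ = s₀ * (p * h) * h⁻¹ := by rw [h2]
        _ = s₀ * p := by
              rw [mul_assoc s₀ (p * h) h⁻¹, mul_assoc p h h⁻¹, mul_inv_cancel, mul_one]
      have hcardsplit : Nat.card ↥S = 2 * Nat.card ↥H := by
        have e1 : Nat.card ↥S = (S : Set (PMat (Fin n))ˣ).ncard :=
          (Nat.card_coe_set_eq _)
        rw [e1, hpart, Set.ncard_union_eq hdisj hHfin (hHfin.image _),
          Set.ncard_image_of_injective _ (mul_right_injective s₀),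
          ← Nat.card_coe_set_eq, two_mul]
        rfl
      have hMU : measUpdate (Fin n) p S = Subgroup.closure {p} ⊔ H := rfl
      have hset := sup_coe_adjoin H p hp2 hcommH
      have hneg : (-1 : (PMat (Fin n))ˣ) ∉ Subgroup.closure {p} ⊔ H := by
        intro hmem
        have hmem' : (-1 : (PMat (Fin n))ˣ)
            ∈ ((Subgroup.closure {p} ⊔ H : Subgroup (PMat (Fin n))ˣ) : Set (PMat (Fin n))ˣ) := hmem
        rw [hset] at hmem'
        rcases hmem' with h | ⟨h, hh, heq⟩
        · exact hS.neg_one_notMem (Subgroup.mem_inf.mp h).1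
        · apply hnpS
          have hpe : h = -p := by
            have h2 := congrArg (fun z => p * z) heq
            simp only at h2
            rwa [← mul_assoc, hp2, one_mul, mul_neg, mul_one] at h2
          exact (Subgroup.mem_inf.mp (hpe ▸ hh)).1
      have hle : Subgroup.closure {p} ⊔ H ≤ PauliGroup (Fin n) :=
        sup_le ((Subgroup.closure_le _).mpr (Set.singleton_subset_iff.mpr hp))
          (le_trans inf_le_left hS.le)
      have hS'2 : ∀ x ∈ Subgroup.closure {p} ⊔ H, x * x = 1 := by
        intro x hx
        rcases hsq x (hle hx) with h | h
        · exact h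
        · exact absurd (h ▸ mul_mem hx hx) hneg
      have hfinS' : Finite ↥(Subgroup.closure {p} ⊔ H) := by
        have hUfin : ((Subgroup.closure {p} ⊔ H : Subgroup (PMat (Fin n))ˣ)
            : Set (PMat (Fin n))ˣ).Finite := by
          rw [hset]
          exact hHfin.union (hHfin.image _)
        exact Set.finite_coe_iff.mpr hUfin
      have hcard : Nat.card ↥(Subgroup.closure {p} ⊔ H) = 2 ^ r := by
        rw [card_adjoin H p hp2 hcommH hpH hfinH, ← hcardsplit, hcardS]
      refine ⟨?_, ?_, ?_⟩
      · rw [hMU]; exact ⟨hle, hneg⟩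
      · intro hcond; exact absurd hcond.1 hpC
      · intro _
        rw [hMU]
        exact (hasRank_iff_card _ hS'2 hfinS' r).mpr hcard


end
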